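/- Let Z be a Banach space with a shrinking, bimonotone FDD (F_i), let Q : Z -> X be a quotient map, and assume X carries the quotient norm ||x|| = inf{||y|| : Qy = x}, so that Q* : X* -> Z* is an isometric embedding. If (x_i) is a w*-null sequence in the unit sphere S_{X*}, then there exist a subsequence (x'_i) of (x_i) and a weakly null sequence (y_i) in the unit sphere S_X such that x'_i(y_i) > 3/4 for all i. -/

import Mathlib

open Filter Topology Set

noncomputable section

/-- A bundled (real) Banach space. -/
structure BanachSp : Type 1 where
  carrier : Type
  [nacg : NormedAddCommGroup carrier]
  [nsp : NormedSpace ℝ carrier]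
  [complete : CompleteSpace carrier]

attribute [instance] BanachSp.nacg BanachSp.nsp BanachSp.complete

instance : CoeSort BanachSp Type := ⟨BanachSp.carrier⟩

section Seqs

variable {V : Type*} [NormedAddCommGroup V] [NormedSpace ℝ V]
variable {W : Type*} [NormedAddCommGroup W] [NormedSpace ℝ W]
variable {X : Type*} [NormedAddCommGroup X] [NormedSpace ℝ X]

/-- `DomBy u x C` : the sequence `(u i)` `C`-dominates the sequence `(x i)`, i.e.
`‖∑ a i • x i‖ ≤ C * ‖∑ a i • u i‖` for all finitely supported scalars. -/
def DomBy (u : ℕ → V) (x : ℕ → X) (C : ℝ) : Prop :=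
  ∀ (a : ℕ → ℝ) (n : ℕ),
    ‖∑ i ∈ Finset.range n, a i • x i‖ ≤ C * ‖∑ i ∈ Finset.range n, a i • u i‖

def IsNormalized (v : ℕ → V) : Prop := ∀ i, ‖v i‖ = 1

/-- A basic sequence: nonzero vectors with uniformly bounded partial sum projections. -/
def IsBasicSeq (v : ℕ → V) : Prop :=
  (∀ i, v i ≠ 0) ∧ ∃ K : ℝ, 1 ≤ K ∧ ∀ (a : ℕ → ℝ) (m n : ℕ), m ≤ n →
    ‖∑ i ∈ Finset.range m, a i • v i‖ ≤ K * ‖∑ i ∈ Finset.range n, a i • v i‖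

/-- `1`-unconditionality : changing signs of coefficients does not change the norm. -/
def IsOneUnconditional (v : ℕ → V) : Prop :=
  ∀ (a ε : ℕ → ℝ), (∀ i, ε i = 1 ∨ ε i = -1) → ∀ n : ℕ,
    ‖∑ i ∈ Finset.range n, (ε i * a i) • v i‖ = ‖∑ i ∈ Finset.range n, a i • v i‖

/-- Bimonotonicity of a basic sequence: interval projections have norm at most one. -/
def IsBimonotoneSeq (v : ℕ → V) : Prop :=
  ∀ (a : ℕ → ℝ) (p q n : ℕ), q ≤ n →
    ‖∑ i ∈ Finset.Ico p q, a i • v i‖ ≤ ‖∑ i ∈ Finset.range n, a i • v i‖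

/-- `(v i)` is `D`-right-dominant : if `m i ≤ n i` for all `i` then `(v (m i))` is
`D`-dominated by `(v (n i))`. -/
def RightDominantC (v : ℕ → V) (D : ℝ) : Prop :=
  ∀ m n : ℕ → ℕ, StrictMono m → StrictMono n → (∀ i, m i ≤ n i) →
    DomBy (fun i => v (n i)) (fun i => v (m i)) D

def RightDominant (v : ℕ → V) : Prop := ∃ D : ℝ, 1 ≤ D ∧ RightDominantC v D

/-- `(v i)` is `D`-left-dominant : if `m i ≤ n i` for all `i` then `(v (m i))`
`D`-dominates `(v (n i))`. -/
def LeftDominantC (v : ℕ → V) (D : ℝ) : Prop :=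
  ∀ m n : ℕ → ℕ, StrictMono m → StrictMono n → (∀ i, m i ≤ n i) →
    DomBy (fun i => v (m i)) (fun i => v (n i)) D

/-- `C`-block-stability: any two normalized block bases whose blocks run along the same
successive intervals are `C`-equivalent. -/
def BlockStableC (v : ℕ → V) (C : ℝ) : Prop :=
  ∀ (x y : ℕ → V) (k : ℕ → ℕ), StrictMono k →
    (∀ i, x i ∈ Submodule.span ℝ (v '' Set.Ico (k i) (k (i+1)))) →
    (∀ i, y i ∈ Submodule.span ℝ (v '' Set.Ico (k i) (k (i+1)))) →
    (∀ i, ‖x i‖ = 1) → (∀ i, ‖y i‖ = 1) → DomBy x y C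

def BlockStable (v : ℕ → V) : Prop := ∃ C : ℝ, 1 ≤ C ∧ BlockStableC v C

/-- A basic sequence is shrinking if every functional is small on far tails of its span. -/
def ShrinkingSeq (v : ℕ → V) : Prop :=
  ∀ φ : V →L[ℝ] ℝ, ∀ δ : ℝ, 0 < δ → ∃ m : ℕ, ∀ (a : ℕ → ℝ) (n : ℕ),
    ‖∑ i ∈ Finset.Ico m n, a i • v i‖ ≤ 1 →
    |φ (∑ i ∈ Finset.Ico m n, a i • v i)| ≤ δ

/-- A basic sequence is boundedly complete if series with bounded partial sums converge. -/
def BoundedlyCompleteSeq (v : ℕ → V) : Prop :=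
  ∀ a : ℕ → ℝ, (∃ M : ℝ, ∀ n, ‖∑ i ∈ Finset.range n, a i • v i‖ ≤ M) →
    ∃ s : V, Tendsto (fun n => ∑ i ∈ Finset.range n, a i • v i) atTop (𝓝 s)

/-- `(w i)` represents (isometrically) the sequence of biorthogonal functionals of the
`1`-unconditional basic sequence `(v i)`: the norm of `∑ a i • w i` is the supremum of the
pairings `∑ a i * b i` over `b` with `‖∑ b i • v i‖ ≤ 1`. -/
def IsBiorthDual (v : ℕ → V) (w : ℕ → W) : Prop :=
  ∀ (a : ℕ → ℝ) (n : ℕ),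
    IsLUB {r : ℝ | ∃ b : ℕ → ℝ, ‖∑ i ∈ Finset.range n, b i • v i‖ ≤ 1 ∧
      r = ∑ i ∈ Finset.range n, a i * b i} ‖∑ i ∈ Finset.range n, a i • w i‖

def WeaklyNullSeq (x : ℕ → X) : Prop :=
  ∀ φ : X →L[ℝ] ℝ, Tendsto (fun i => φ (x i)) atTop (𝓝 0)

end Seqs

/-- A finite-dimensional decomposition (FDD) of `Z` : finite-dimensional subspaces `E i`
together with the coordinate projections `P i`, such that every `z` is the sum of its
coordinates, uniquely. -/
structure FDD (Z : Type*) [NormedAddCommGroup Z] [NormedSpace ℝ Z] where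
  E : ℕ → Submodule ℝ Z
  finDim : ∀ n, FiniteDimensional ℝ (E n)
  P : ℕ → Z →L[ℝ] Z
  mem_E : ∀ i z, P i z ∈ E i
  sum_eq : ∀ z : Z, Tendsto (fun n => ∑ i ∈ Finset.range n, P i z) atTop (𝓝 z)
  unique : ∀ (z : Z) (f : ℕ → Z), (∀ i, f i ∈ E i) →
    Tendsto (fun n => ∑ i ∈ Finset.range n, f i) atTop (𝓝 z) → ∀ i, f i = P i z

namespace FDD

variable {Z : Type*} [NormedAddCommGroup Z] [NormedSpace ℝ Z]
variable {V : Type*} [NormedAddCommGroup V] [NormedSpace ℝ V]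
variable {W : Type*} [NormedAddCommGroup W] [NormedSpace ℝ W]

/-- The canonical projection `P^E_s` onto the span of `(E i : i ∈ s)`. -/
def proj (F : FDD Z) (s : Finset ℕ) : Z →L[ℝ] Z := ∑ i ∈ s, F.P i

/-- The support of a vector with respect to the FDD. -/
def supp (F : FDD Z) (z : Z) : Set ℕ := {i | F.P i z ≠ 0}

/-- `min supp_E z`. -/
def minSupp (F : FDD Z) (z : Z) : ℕ := sInf (F.supp z)

/-- A block sequence with respect to an FDD: supports lie in successive intervals. -/
def IsBlockSeq (F : FDD Z) (z : ℕ → Z) : Prop :=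
  ∃ k : ℕ → ℕ, StrictMono k ∧ ∀ i, F.supp (z i) ⊆ Set.Ico (k i) (k (i+1))

/-- Bimonotonicity: all interval projections have norm at most `1`. -/
def Bimonotone (F : FDD Z) : Prop :=
  ∀ (m n : ℕ) (z : Z), ‖F.proj (Finset.Icc m n) z‖ ≤ ‖z‖

/-- `C` is the projection constant: the supremum of norms of interval projections. -/
def IsProjConst (F : FDD Z) (C : ℝ) : Prop :=
  IsLUB {r : ℝ | ∃ (m n : ℕ) (z : Z), ‖z‖ ≤ 1 ∧ r = ‖F.proj (Finset.Icc m n) z‖} C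

/-- The FDD is shrinking: every functional is the norm limit of its finite-dimensional
restrictions, i.e. the biorthogonal functionals form an FDD of the dual. -/
def Shrinking (F : FDD Z) : Prop :=
  ∀ φ : Z →L[ℝ] ℝ,
    Tendsto (fun n => ‖φ - φ.comp (F.proj (Finset.range n))‖) atTop (𝓝 0)

/-- The FDD is boundedly complete. -/
def BoundedlyComplete (F : FDD Z) : Prop :=
  ∀ f : ℕ → Z, (∀ i, f i ∈ F.E i) →
    (∃ M : ℝ, ∀ n, ‖∑ i ∈ Finset.range n, f i‖ ≤ M) →
    ∃ z : Z, Tendsto (fun n => ∑ i ∈ Finset.range n, f i) atTop (𝓝 z)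

/-- `H` is a blocking of `F`. -/
def IsBlockingOf (H F : FDD Z) : Prop :=
  ∃ m : ℕ → ℕ, m 0 = 0 ∧ StrictMono m ∧
    ∀ j, H.E j = ⨆ i ∈ Finset.Ico (m j) (m (j+1)), F.E i

/-- The closed span `Z_m` of the subspaces `E i`, `i ≥ m` (the first `m` coordinates
removed). -/
def tail (F : FDD Z) (m : ℕ) : Set Z :=
  closure (↑(⨆ i ∈ Set.Ici m, F.E i) : Set Z)

/-- Subsequential `C`-`V`-upper block estimates. -/
def UpperBlockC (F : FDD Z) (v : ℕ → V) (C : ℝ) : Prop :=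
  ∀ z : ℕ → Z, F.IsBlockSeq z → (∀ i, ‖z i‖ = 1) →
    DomBy (fun i => v (F.minSupp (z i))) z C

def UpperBlock (F : FDD Z) (v : ℕ → V) : Prop := ∃ C : ℝ, 1 ≤ C ∧ F.UpperBlockC v C

/-- Subsequential `C`-`V`-lower block estimates. -/
def LowerBlockC (F : FDD Z) (v : ℕ → V) (C : ℝ) : Prop :=
  ∀ z : ℕ → Z, F.IsBlockSeq z → (∀ i, ‖z i‖ = 1) →
    DomBy z (fun i => v (F.minSupp (z i))) C

def LowerBlock (F : FDD Z) (v : ℕ → V) : Prop := ∃ C : ℝ, 1 ≤ C ∧ F.LowerBlockC v C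

/-- A functional supported (w.r.t. the biorthogonal FDD `(E i ^*)`) on the finite set `s`. -/
def dualSupported (F : FDD Z) (s : Finset ℕ) (φ : Z →L[ℝ] ℝ) : Prop :=
  ∀ z : Z, φ z = φ (F.proj s z)

/-- A block sequence of the biorthogonal functionals `(E i ^*)`. -/
def IsDualBlockSeq (F : FDD Z) (φ : ℕ → Z →L[ℝ] ℝ) : Prop :=
  ∃ k : ℕ → ℕ, StrictMono k ∧
    ∀ i, F.dualSupported (Finset.Ico (k i) (k (i+1))) (φ i)

/-- `min supp` of a functional w.r.t. `(E i ^*)`. -/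
def dualMinSupp (F : FDD Z) (φ : Z →L[ℝ] ℝ) : ℕ :=
  sInf {j | ∃ z, φ (F.P j z) ≠ 0}

/-- The biorthogonal FDD `(E i ^*)` satisfies subsequential `C`-`V^*`-lower block
estimates in `Z^(*)`. -/
def DualLowerBlockC (F : FDD Z) (w : ℕ → W) (C : ℝ) : Prop :=
  ∀ φ : ℕ → Z →L[ℝ] ℝ, F.IsDualBlockSeq φ → (∀ i, ‖φ i‖ = 1) →
    DomBy φ (fun i => w (F.dualMinSupp (φ i))) C

def DualLowerBlock (F : FDD Z) (w : ℕ → W) : Prop := ∃ C : ℝ, 1 ≤ C ∧ F.DualLowerBlockC w C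

/-- The biorthogonal FDD `(E i ^*)` satisfies subsequential `C`-`V`-upper block
estimates. -/
def DualUpperBlockC (F : FDD Z) (w : ℕ → W) (C : ℝ) : Prop :=
  ∀ φ : ℕ → Z →L[ℝ] ℝ, F.IsDualBlockSeq φ → (∀ i, ‖φ i‖ = 1) →
    DomBy (fun i => w (F.dualMinSupp (φ i))) φ C

/-- A `δ̄`-skipped block sequence w.r.t. the FDD. -/
def IsSkippedBlock (F : FDD Z) (δ : ℕ → ℝ) (y : ℕ → Z) : Prop :=
  (∀ i, ‖y i‖ = 1) ∧ ∃ k : ℕ → ℕ, k 0 = 0 ∧ StrictMono k ∧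
    ∀ i, ‖F.proj (Finset.Ioo (k i) (k (i+1))) (y i) - y i‖ < δ i

end FDD

section Trees

variable {V : Type*} [NormedAddCommGroup V] [NormedSpace ℝ V]
variable {W : Type*} [NormedAddCommGroup W] [NormedSpace ℝ W]

/-- The finite set `{n 0, …, n (2l+1)}`, i.e. the branch node of level `l+1` along the
strictly increasing sequence `n`. -/
def branchSet (n : ℕ → ℕ) (l : ℕ) : Finset ℕ := Finset.image n (Finset.range (2*l+2))

/-- A normalized weakly null even tree in `X` (indexed by finite sets of naturals, which
correspond to finite strictly increasing sequences). -/
def WNEvenTree {X : Type*} [NormedAddCommGroup X] [NormedSpace ℝ X]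
    (x : Finset ℕ → X) : Prop :=
  (∀ s : Finset ℕ, Even s.card → ‖x s‖ = 1) ∧
  ∀ s : Finset ℕ, Odd s.card →
    ∀ φ : X →L[ℝ] ℝ, Tendsto (fun k => φ (x (insert k s))) atTop (𝓝 0)

/-- Subsequential `C`-`V`-upper tree estimates. -/
def UpperTreeC (v : ℕ → V) (X : Type*) [NormedAddCommGroup X] [NormedSpace ℝ X]
    (C : ℝ) : Prop :=
  ∀ x : Finset ℕ → X, WNEvenTree x →
    ∃ n : ℕ → ℕ, StrictMono n ∧
      DomBy (fun l => v (n (2*l))) (fun l => x (branchSet n l)) C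

/-- Subsequential `V`-upper tree estimates. -/
def UpperTree (v : ℕ → V) (X : Type*) [NormedAddCommGroup X] [NormedSpace ℝ X] : Prop :=
  ∃ C : ℝ, 1 ≤ C ∧ UpperTreeC v X C

/-- A normalized `w^*`-null even tree in the dual of `X`. -/
def WStarNullEvenTree {X : Type*} [NormedAddCommGroup X] [NormedSpace ℝ X]
    (f : Finset ℕ → (X →L[ℝ] ℝ)) : Prop :=
  (∀ s : Finset ℕ, Even s.card → ‖f s‖ = 1) ∧
  ∀ s : Finset ℕ, Odd s.card →
    ∀ u : X, Tendsto (fun k => f (insert k s) u) atTop (𝓝 0)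

/-- Subsequential `C`-`V^*`-lower `w^*` tree estimates for the dual of `X`. -/
def LowerWStarTreeC (w : ℕ → W) (X : Type*) [NormedAddCommGroup X] [NormedSpace ℝ X]
    (C : ℝ) : Prop :=
  ∀ f : Finset ℕ → (X →L[ℝ] ℝ), WStarNullEvenTree f →
    ∃ n : ℕ → ℕ, StrictMono n ∧
      DomBy (fun l => f (branchSet n l)) (fun l => w (n (2*l))) C

end Trees

section Maps

variable {X : Type*} [NormedAddCommGroup X] [NormedSpace ℝ X]
variable {Y : Type*} [NormedAddCommGroup Y] [NormedSpace ℝ Y]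

/-- `X` embeds isomorphically into `Y`. -/
def Embeds (X Y : Type*) [NormedAddCommGroup X] [NormedSpace ℝ X]
    [NormedAddCommGroup Y] [NormedSpace ℝ Y] : Prop :=
  ∃ T : X →L[ℝ] Y, ∃ c : ℝ, 0 < c ∧ ∀ x : X, c * ‖x‖ ≤ ‖T x‖

/-- `X` is a quotient of `Z` (there is a bounded linear surjection `Z → X`). -/
def IsQuotientOf (X Z : Type*) [NormedAddCommGroup X] [NormedSpace ℝ X]
    [NormedAddCommGroup Z] [NormedSpace ℝ Z] : Prop :=
  ∃ Q : Z →L[ℝ] X, Function.Surjective Q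

/-- A map between dual spaces is `w^*`-`w^*` continuous. -/
def WStarWStarContinuous {X Z : Type*} [NormedAddCommGroup X] [NormedSpace ℝ X]
    [NormedAddCommGroup Z] [NormedSpace ℝ Z]
    (T : StrongDual ℝ X →L[ℝ] StrongDual ℝ Z) : Prop :=
  Continuous (fun φ : WeakDual ℝ X =>
    StrongDual.toWeakDual (T (WeakDual.toStrongDual φ)))

end Maps

/-!
Each `x j ∘ Q` nearly attains its norm `1` at some `z` in the unit ball of `Z`. Being `w^*`-null,
`x j ∘ Q` is eventually uniformly small on the finite-dimensional span of `E 0, …, E (m-1)`, and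
by shrinking it is small on a far tail of `z`; bimonotonicity lets us replace `z` by its middle
piece `P_[m,n] z` without increasing its norm. Doing this with `m = i` along a subsequence gives
vectors `w i` of norm at most `1` vanishing on the first `i` coordinates, which the shrinking
property makes weakly null; the normalized images of `w i` under `Q` are the required `y i`.
-/

section FiniteDimensional

variable {𝕜 E F ι : Type*} [NontriviallyNormedField 𝕜] [CompleteSpace 𝕜]
  [NormedAddCommGroup E] [NormedSpace 𝕜 E] [FiniteDimensional 𝕜 E]
  [NormedAddCommGroup F] [NormedSpace 𝕜 F]

theorem ContinuousLinearMap.tendsto_norm_zero_of_tendsto_apply {l : Filter ι}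
    {u : ι → E →L[𝕜] F} (h : ∀ v, Tendsto (fun j => u j v) l (𝓝 0)) :
    Tendsto (fun j => ‖u j‖) l (𝓝 0) := by
  let b := Module.finBasis 𝕜 E
  obtain ⟨C, -, hC⟩ := b.exists_opNorm_le (F := F)
  have hsum : Tendsto (fun j => ∑ t, ‖u j (b t)‖) l (𝓝 0) := by
    simpa using tendsto_finsetSum Finset.univ fun t _ => (h (b t)).norm
  refine squeeze_zero (fun j => norm_nonneg _)
    (fun j => hC (Finset.sum_nonneg fun t _ => norm_nonneg _) fun t => ?_)
    (by simpa using hsum.const_mul C)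
  exact Finset.single_le_sum (f := fun t => ‖u j (b t)‖) (fun t _ => norm_nonneg _)
    (Finset.mem_univ t)

end FiniteDimensional

section Quotient

variable {Z X : Type*} [SeminormedAddCommGroup Z] [SeminormedAddCommGroup X] {f : Z → X}

theorem norm_apply_le_of_norm_eq_sInf
    (hf : ∀ x : X, ‖x‖ = sInf {r : ℝ | ∃ z : Z, f z = x ∧ r = ‖z‖}) (z : Z) :
    ‖f z‖ ≤ ‖z‖ := by
  rw [hf (f z)]
  exact csInf_le ⟨0, by rintro r ⟨z', -, rfl⟩; exact norm_nonneg _⟩ ⟨z, rfl, rfl⟩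

theorem exists_apply_eq_norm_lt_of_norm_eq_sInf
    (hsurj : Function.Surjective f)
    (hf : ∀ x : X, ‖x‖ = sInf {r : ℝ | ∃ z : Z, f z = x ∧ r = ‖z‖}) {x : X} {r : ℝ}
    (hx : ‖x‖ < r) : ∃ z, f z = x ∧ ‖z‖ < r := by
  obtain ⟨z, hz⟩ := hsurj x
  rw [hf x] at hx
  have hne : {r : ℝ | ∃ z : Z, f z = x ∧ r = ‖z‖}.Nonempty := ⟨‖z‖, z, hz, rfl⟩
  obtain ⟨-, ⟨z, hzx, rfl⟩, hzr⟩ := exists_lt_of_csInf_lt hne hx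
  exact ⟨z, hzx, hzr⟩

end Quotient

section Dual

variable {V W : Type*} [NormedAddCommGroup V] [NormedSpace ℝ V]
  [NormedAddCommGroup W] [NormedSpace ℝ W]

theorem ContinuousLinearMap.exists_norm_lt_one_lt_apply (f : StrongDual ℝ V) {r : ℝ}
    (hr : r < ‖f‖) : ∃ u, ‖u‖ < 1 ∧ r < f u := by
  obtain ⟨u, hu, hru⟩ := f.exists_lt_apply_of_lt_opNorm hr
  rw [Real.norm_eq_abs, lt_abs] at hru
  rcases hru with hru | hru
  · exact ⟨u, hu, hru⟩
  · exact ⟨-u, by rwa [norm_neg], by rwa [map_neg]⟩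

theorem ContinuousLinearMap.lt_apply_inv_norm_smul (f : StrongDual ℝ V) {v : V} {s : ℝ}
    (hs : 0 ≤ s) (hv : ‖v‖ ≤ 1) (h : s < f v) : s < f (‖v‖⁻¹ • v) := by
  have hv0 : 0 < ‖v‖ := norm_pos_iff.2 fun hv0 => by simp [hv0] at h; linarith
  rw [map_smul, smul_eq_mul]
  exact h.trans_le (le_mul_of_one_le_left (hs.trans h.le) ((one_le_inv₀ hv0).2 hv))

theorem WeaklyNullSeq.map {x : ℕ → V} (hx : WeaklyNullSeq x) (T : V →L[ℝ] W) :
    WeaklyNullSeq fun i => T (x i) :=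
  fun φ => hx (φ.comp T)

theorem WeaklyNullSeq.smul {x : ℕ → V} (hx : WeaklyNullSeq x) {c : ℕ → ℝ} {C : ℝ}
    (hc : ∀ i, |c i| ≤ C) : WeaklyNullSeq fun i => c i • x i := by
  intro φ
  simp only [map_smul, smul_eq_mul]
  refine squeeze_zero_norm (a := fun i => C * ‖φ (x i)‖) (fun i => ?_)
    (by simpa using (hx φ).norm.const_mul C)
  rw [norm_mul, Real.norm_eq_abs (c i)]
  exact mul_le_mul_of_nonneg_right (hc i) (norm_nonneg _)

end Dual

namespace FDD

variable {Z : Type*} [NormedAddCommGroup Z] [NormedSpace ℝ Z] (F : FDD Z)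

theorem proj_apply (s : Finset ℕ) (z : Z) : F.proj s z = ∑ i ∈ s, F.P i z := by
  simp [FDD.proj]

theorem P_P_of_ne {i j : ℕ} (h : i ≠ j) (z : Z) : F.P i (F.P j z) = 0 := by
  have hsum : Tendsto (fun n => ∑ k ∈ Finset.range n, if k = j then F.P j z else 0) atTop
      (𝓝 (F.P j z)) := by
    refine tendsto_const_nhds.congr' ?_
    filter_upwards [eventually_gt_atTop j] with n hn
    simp [hn]
  have := F.unique _ _ (fun k => by split_ifs with hk <;> simp [hk, F.mem_E]) hsum i
  simpa [h] using this.symm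

theorem proj_proj_of_disjoint {s t : Finset ℕ} (h : Disjoint s t) (z : Z) :
    F.proj s (F.proj t z) = 0 := by
  simp only [proj_apply, map_sum]
  refine Finset.sum_eq_zero fun i hi => Finset.sum_eq_zero fun j hj => ?_
  exact F.P_P_of_ne (Finset.disjoint_iff_ne.1 h j hj i hi) z

theorem proj_union {s t : Finset ℕ} (h : Disjoint s t) :
    F.proj (s ∪ t) = F.proj s + F.proj t :=
  Finset.sum_union h

theorem tendsto_norm_comp_P {ι : Type*} {l : Filter ι} {φ : ι → StrongDual ℝ Z}
    (hφ : ∀ z, Tendsto (fun j => φ j z) l (𝓝 0)) (i : ℕ) :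
    Tendsto (fun j => ‖(φ j).comp (F.P i)‖) l (𝓝 0) := by
  have := F.finDim i
  let p : Z →L[ℝ] F.E i := (F.P i).codRestrict (F.E i) (F.mem_E i)
  have hrestrict : Tendsto (fun j => ‖(φ j).comp (F.E i).subtypeL‖) l (𝓝 0) :=
    ContinuousLinearMap.tendsto_norm_zero_of_tendsto_apply fun v => hφ v
  refine squeeze_zero (fun j => norm_nonneg _) (fun j => ?_)
    (by simpa using hrestrict.mul_const ‖p‖)
  exact ((φ j).comp (F.E i).subtypeL).opNorm_comp_le p

theorem tendsto_norm_comp_proj {ι : Type*} {l : Filter ι} {φ : ι → StrongDual ℝ Z}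
    (hφ : ∀ z, Tendsto (fun j => φ j z) l (𝓝 0)) (s : Finset ℕ) :
    Tendsto (fun j => ‖(φ j).comp (F.proj s)‖) l (𝓝 0) := by
  refine squeeze_zero (fun j => norm_nonneg _) (fun j => ?_)
    (by simpa using tendsto_finsetSum s fun i _ => F.tendsto_norm_comp_P hφ i)
  rw [proj, ContinuousLinearMap.comp_finsetSum]
  exact norm_sum_le _ _

variable {F}

theorem Shrinking.weaklyNullSeq_of_proj_range_eq_zero (hF : F.Shrinking) {w : ℕ → Z}
    {C : ℝ} (hC : ∀ i, ‖w i‖ ≤ C) (hw : ∀ i, F.proj (Finset.range i) (w i) = 0) :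
    WeaklyNullSeq w := by
  intro θ
  refine squeeze_zero_norm (a := fun i => ‖θ - θ.comp (F.proj (Finset.range i))‖ * C)
    (fun i => ?_) (by simpa using (hF θ).mul_const C)
  have hθw : θ (w i) = (θ - θ.comp (F.proj (Finset.range i))) (w i) := by simp [hw i]
  rw [hθw]
  exact ((θ - _).le_opNorm _).trans (mul_le_mul_of_nonneg_left (hC i) (norm_nonneg _))

theorem Shrinking.exists_proj_range_eq_zero_le_apply (hF : F.Shrinking) (hbm : F.Bimonotone)
    (ψ : StrongDual ℝ Z) (m : ℕ) (z : Z) {ε : ℝ} (hε : 0 < ε) :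
    ∃ z', ‖z'‖ ≤ ‖z‖ ∧ F.proj (Finset.range m) z' = 0 ∧
      ψ z - (‖ψ.comp (F.proj (Finset.range m))‖ + ε) * ‖z‖ ≤ ψ z' := by
  obtain ⟨n, hmn, hn⟩ := ((eventually_ge_atTop m).and
    (((hF ψ).comp (tendsto_add_atTop_nat 1)).eventually_lt_const hε)).exists
  have hdisj : Disjoint (Finset.range m) (Finset.Icc m n) := by
    simp only [Finset.disjoint_left, Finset.mem_range, Finset.mem_Icc]
    omega
  have hsplit : F.proj (Finset.range (n + 1)) z =
      F.proj (Finset.range m) z + F.proj (Finset.Icc m n) z := by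
    rw [← add_apply, ← F.proj_union hdisj]
    congr 2
    ext k
    simp only [Finset.mem_union, Finset.mem_range, Finset.mem_Icc]
    omega
  refine ⟨F.proj (Finset.Icc m n) z, hbm m n z, F.proj_proj_of_disjoint hdisj z, ?_⟩
  have htail := (ψ - ψ.comp (F.proj (Finset.range (n + 1)))).le_opNorm z
  have hhead := (ψ.comp (F.proj (Finset.range m))).le_opNorm z
  simp only [Function.comp_apply, sub_apply,
    ContinuousLinearMap.comp_apply, hsplit, map_add, Real.norm_eq_abs] at htail hhead hn
  have := mul_le_mul_of_nonneg_right hn.le (norm_nonneg z)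
  linarith [abs_le.1 htail, abs_le.1 hhead]

theorem Shrinking.eventually_exists_proj_range_eq_zero_lt_apply (hF : F.Shrinking)
    (hbm : F.Bimonotone) {φ : ℕ → StrongDual ℝ Z}
    (hφ : ∀ z, Tendsto (fun j => φ j z) atTop (𝓝 0)) {r s : ℝ} (hsr : s < r)
    (hnorm : ∀ j, ∃ z, ‖z‖ ≤ 1 ∧ r < φ j z) (m : ℕ) :
    ∀ᶠ j in atTop, ∃ z, ‖z‖ ≤ 1 ∧ F.proj (Finset.range m) z = 0 ∧ s < φ j z := by
  have hε : 0 < (r - s) / 2 := by linarith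
  filter_upwards [(F.tendsto_norm_comp_proj hφ (Finset.range m)).eventually_lt_const hε]
    with j hj
  obtain ⟨z, hz1, hz⟩ := hnorm j
  obtain ⟨z', hz'z, hz'0, hz'⟩ := hF.exists_proj_range_eq_zero_le_apply hbm (φ j) m z hε
  refine ⟨z', hz'z.trans hz1, hz'0, ?_⟩
  have hloss : (‖(φ j).comp (F.proj (Finset.range m))‖ + (r - s) / 2) * ‖z‖ < r - s :=
    (mul_le_of_le_one_right (by positivity) hz1).trans_lt (by linarith)
  linarith

end FDD

theorem wstar_null_normed_by_weakly_null_general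
    {Z : Type*} [NormedAddCommGroup Z] [NormedSpace ℝ Z]
    {X : Type*} [NormedAddCommGroup X] [NormedSpace ℝ X]
    (F : FDD Z) (hFsh : F.Shrinking) (hbm : F.Bimonotone)
    (Q : Z →L[ℝ] X) (hQ : Function.Surjective Q)
    (hquot : ∀ x : X, ‖x‖ = sInf {r : ℝ | ∃ z : Z, Q z = x ∧ r = ‖z‖})
    (x : ℕ → StrongDual ℝ X) (hx1 : ∀ i, ‖x i‖ = 1)
    (hxw : ∀ u : X, Tendsto (fun i => x i u) atTop (𝓝 0)) :
    ∃ σ : ℕ → ℕ, StrictMono σ ∧ ∃ y : ℕ → X,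
      (∀ i, ‖y i‖ = 1) ∧ WeaklyNullSeq y ∧ ∀ i, x (σ i) (y i) > 3/4 := by
  have hnorming : ∀ j, ∃ z : Z, ‖z‖ ≤ 1 ∧ 7/8 < (x j).comp Q z := fun j => by
    obtain ⟨u, hu, hxu⟩ := (x j).exists_norm_lt_one_lt_apply (r := 7/8) (by rw [hx1]; norm_num)
    obtain ⟨z, rfl, hz⟩ := exists_apply_eq_norm_lt_of_norm_eq_sInf hQ hquot hu
    exact ⟨z, hz.le, hxu⟩
  obtain ⟨σ, hσ, hw⟩ := extraction_forall_of_eventually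
    (hFsh.eventually_exists_proj_range_eq_zero_lt_apply hbm (φ := fun j => (x j).comp Q)
      (fun z => hxw (Q z)) (by norm_num : (3/4 : ℝ) < 7/8) hnorming)
  choose w hw1 hw0 hwx using hw
  have hQw1 : ∀ i, ‖Q (w i)‖ ≤ 1 :=
    fun i => (norm_apply_le_of_norm_eq_sInf hquot _).trans (hw1 i)
  have hQw : ∀ i, 3/4 < ‖Q (w i)‖ := fun i => (hwx i).trans_le
    ((le_abs_self _).trans (by simpa [hx1] using (x (σ i)).le_opNorm (Q (w i))))
  refine ⟨σ, hσ, fun i => ‖Q (w i)‖⁻¹ • Q (w i), fun i => ?_, ?_, fun i =>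
    (x (σ i)).lt_apply_inv_norm_smul (by norm_num) (hQw1 i) (hwx i)⟩
  · rw [norm_smul, norm_inv, norm_norm, inv_mul_cancel₀ (by linarith [hQw i])]
  · refine ((hFsh.weaklyNullSeq_of_proj_range_eq_zero hw1 hw0).map Q).smul (C := 4/3) fun i => ?_
    rw [abs_inv, abs_norm]
    exact inv_le_of_inv_le₀ (by norm_num) (by linarith [hQw i])

/-- The step in the proof of Lemma 2.7: given a quotient map `Q` from a space with a
shrinking bimonotone FDD onto `X` (with the quotient norm), every `w^*`-null sequence in
`S_{X^*}` admits a subsequence which is nearly normed by a weakly null sequence in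
`S_X`. -/
theorem wstar_null_normed_by_weakly_null
    {Z : Type*} [NormedAddCommGroup Z] [NormedSpace ℝ Z] [CompleteSpace Z]
    {X : Type*} [NormedAddCommGroup X] [NormedSpace ℝ X] [CompleteSpace X]
    (F : FDD Z) (hFsh : F.Shrinking) (hbm : F.Bimonotone)
    (Q : Z →L[ℝ] X) (hQ : Function.Surjective Q)
    (hquot : ∀ x : X, ‖x‖ = sInf {r : ℝ | ∃ z : Z, Q z = x ∧ r = ‖z‖})
    (x : ℕ → StrongDual ℝ X) (hx1 : ∀ i, ‖x i‖ = 1)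
    (hxw : ∀ u : X, Tendsto (fun i => x i u) atTop (𝓝 0)) :
    ∃ σ : ℕ → ℕ, StrictMono σ ∧ ∃ y : ℕ → X,
      (∀ i, ‖y i‖ = 1) ∧ WeaklyNullSeq y ∧ ∀ i, x (σ i) (y i) > 3/4 :=
  wstar_null_normed_by_weakly_null_general F hFsh hbm Q hQ hquot x hx1 hxw
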